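/- arXiv:1904.03928 — 7 statements merged into one kernel-verified Lean document; each statement's English description precedes it below -/
import Mathlib

section
/- Let Δ = A₁A₂A₃ be an acute-angled triangle in the Euclidean plane (three affinely independent points all of whose interior angles are strictly less than π/2), and for each i let H_i denote the foot of the altitude from A_i, i.e. the orthogonal projection of A_i onto the line through the other two vertices. Then dist(A₂,A₃)·sin(∠A₂)·sin(∠A₃) = (dist(H₁,H₂) + dist(H₂,H₃) + dist(H₃,H₁))/2, i.e. the invariant T(Δ) equals the semiperimeter of the orthic triangle H₁H₂H₃. -/
open Real EuclideanGeometry InnerProductGeometry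
open scoped RealInnerProductSpace

/-!
The feet of the altitudes from `B` and `C` cut off from the triangle `ABC` a triangle similar to it
with ratio `|cos A|`, so in an acute triangle the orthic perimeter is `a cos A + b cos B + c cos C`.
By the law of sines this is `(a / (2 sin A)) (sin 2A + sin 2B + sin 2C)`, and
`sin 2A + sin 2B + sin 2C = 4 sin A sin B sin C` whenever `A + B + C = π`.
-/

theorem Real.sin_two_mul_add_sin_two_mul_add_sin_two_mul {α β γ : ℝ} (h : α + β + γ = π) :
    sin (2 * α) + sin (2 * β) + sin (2 * γ) = 4 * sin α * sin β * sin γ := by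
  obtain rfl : γ = π - (α + β) := by linarith
  rw [sin_pi_sub, show 2 * (π - (α + β)) = -(2 * (α + β)) + 2 * π by ring, sin_add_two_pi,
    sin_neg, sin_two_mul, sin_two_mul, sin_two_mul, sin_add, cos_add]
  linear_combination (-2 * sin α * cos α) * sin_sq_add_cos_sq β
    + (-2 * sin β * cos β) * sin_sq_add_cos_sq α

namespace EuclideanGeometry

variable {V P : Type*} [NormedAddCommGroup V] [InnerProductSpace ℝ V] [MetricSpace P]
  [NormedAddTorsor V P]

theorem dist_mul_cos_add_dist_mul_cos_add_dist_mul_cos {p₁ p₂ p₃ : P}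
    (h : ¬Collinear ℝ ({p₁, p₂, p₃} : Set P)) :
    dist p₂ p₃ * cos (∠ p₃ p₁ p₂) + dist p₃ p₁ * cos (∠ p₁ p₂ p₃)
        + dist p₁ p₂ * cos (∠ p₂ p₃ p₁) =
      2 * dist p₂ p₃ * sin (∠ p₁ p₂ p₃) * sin (∠ p₂ p₃ p₁) := by
  have hA : sin (∠ p₃ p₁ p₂) ≠ 0 :=
    sin_ne_zero_of_not_collinear (by rwa [Set.insert_comm, Set.pair_comm])
  have hsum : ∠ p₃ p₁ p₂ + ∠ p₁ p₂ p₃ + ∠ p₂ p₃ p₁ = π := by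
    linarith [angle_add_angle_add_angle_eq_pi p₃ (ne₁₂_of_not_collinear h).symm]
  have h2 := sin_two_mul_add_sin_two_mul_add_sin_two_mul hsum
  rw [sin_two_mul, sin_two_mul, sin_two_mul] at h2
  refine mul_left_cancel₀ hA ?_
  linear_combination (dist p₂ p₃ / 2) * h2 - cos (∠ p₁ p₂ p₃) * law_sin p₁ p₂ p₃
    + cos (∠ p₂ p₃ p₁) * law_sin p₃ p₁ p₂

end EuclideanGeometry

section PerpFoot

variable {V : Type*} [NormedAddCommGroup V] [InnerProductSpace ℝ V]

theorem norm_smul_sub_smul_eq_abs_cos_angle_mul_norm_sub {u v : V} (hu : u ≠ 0) (hv : v ≠ 0) :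
    ‖(⟪v, u⟫ / ‖u‖ ^ 2) • u - (⟪u, v⟫ / ‖v‖ ^ 2) • v‖ = |cos (angle u v)| * ‖u - v‖ := by
  have hu' : ‖u‖ ≠ 0 := norm_ne_zero_iff.2 hu
  have hv' : ‖v‖ ≠ 0 := norm_ne_zero_iff.2 hv
  rw [← sq_eq_sq₀ (norm_nonneg _) (by positivity), mul_pow, sq_abs, cos_angle,
    norm_sub_sq_real, norm_sub_sq_real, norm_smul, norm_smul, inner_smul_left, inner_smul_right,
    real_inner_comm u v]
  simp only [Real.norm_eq_abs, mul_pow, sq_abs, conj_trivial]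
  field_simp
  ring

def IsPerpFoot (A B C H : V) : Prop :=
  H ∈ line[ℝ, B, C] ∧ ⟪A - H, C - B⟫ = 0

namespace IsPerpFoot

variable {A B C H : V}

theorem symm (h : IsPerpFoot A B C H) : IsPerpFoot A C B H :=
  ⟨by rw [Set.pair_comm]; exact h.1, by rw [← neg_sub C B, inner_neg_right, h.2, neg_zero]⟩

theorem sub_eq_inner_div_norm_sq_smul (h : IsPerpFoot A B C H) (hBC : B ≠ C) :
    H - B = (⟪A - B, C - B⟫ / ‖C - B‖ ^ 2) • (C - B) := by
  obtain ⟨s, hs⟩ : ∃ s : ℝ, s • (C - B) = H - B :=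
    (vadd_left_mem_affineSpan_pair (v := H - B)).1 (by rw [vadd_eq_add, sub_add_cancel]; exact h.1)
  have hperp := h.2
  rw [← sub_sub_sub_cancel_right A H B, ← hs, inner_sub_left, real_inner_smul_left,
    real_inner_self_eq_norm_sq] at hperp
  have : ‖C - B‖ ≠ 0 := norm_ne_zero_iff.2 (sub_ne_zero.2 hBC.symm)
  rw [← hs]
  congr 1
  field_simp
  linarith

theorem dist_eq_abs_cos_mul_dist {O X Y P Q : V} (hX : X ≠ O) (hY : Y ≠ O)
    (hP : IsPerpFoot Y O X P) (hQ : IsPerpFoot X O Y Q) :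
    dist P Q = |cos (∠ X O Y)| * dist X Y := by
  have h := norm_smul_sub_smul_eq_abs_cos_angle_mul_norm_sub (sub_ne_zero.2 hX) (sub_ne_zero.2 hY)
  rwa [← hP.sub_eq_inner_div_norm_sq_smul hX.symm, ← hQ.sub_eq_inner_div_norm_sq_smul hY.symm,
    sub_sub_sub_cancel_right, sub_sub_sub_cancel_right, ← dist_eq_norm, ← dist_eq_norm] at h

end IsPerpFoot

end PerpFoot

/-- For an acute-angled triangle `A₁A₂A₃`, the invariant
`T(Δ) = dist A₂ A₃ · sin(∠A₂) · sin(∠A₃)` equals the semiperimeter of the orthic triangle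
`H₁H₂H₃` formed by the feet of the altitudes. -/
theorem triangle_invariant_eq_orthic_semiperimeter
    (A₁ A₂ A₃ H₁ H₂ H₃ : EuclideanSpace ℝ (Fin 2))
    (hind : AffineIndependent ℝ ![A₁, A₂, A₃])
    (hacute₁ : ∠ A₂ A₁ A₃ < π / 2)
    (hacute₂ : ∠ A₁ A₂ A₃ < π / 2)
    (hacute₃ : ∠ A₂ A₃ A₁ < π / 2)
    (hH₁mem : H₁ ∈ affineSpan ℝ ({A₂, A₃} : Set (EuclideanSpace ℝ (Fin 2))))
    (hH₁perp : ⟪A₁ - H₁, A₃ - A₂⟫ = 0)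
    (hH₂mem : H₂ ∈ affineSpan ℝ ({A₁, A₃} : Set (EuclideanSpace ℝ (Fin 2))))
    (hH₂perp : ⟪A₂ - H₂, A₃ - A₁⟫ = 0)
    (hH₃mem : H₃ ∈ affineSpan ℝ ({A₁, A₂} : Set (EuclideanSpace ℝ (Fin 2))))
    (hH₃perp : ⟪A₃ - H₃, A₂ - A₁⟫ = 0) :
    dist A₂ A₃ * Real.sin (∠ A₁ A₂ A₃) * Real.sin (∠ A₂ A₃ A₁) =
      (dist H₁ H₂ + dist H₂ H₃ + dist H₃ H₁) / 2 := by
  have hT : ¬Collinear ℝ {A₁, A₂, A₃} := affineIndependent_iff_not_collinear_set.mp hind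
  have h₁₂ := ne₁₂_of_not_collinear hT
  have h₁₃ := ne₁₃_of_not_collinear hT
  have h₂₃ := ne₂₃_of_not_collinear hT
  have f₁ : IsPerpFoot A₁ A₂ A₃ H₁ := ⟨hH₁mem, hH₁perp⟩
  have f₂ : IsPerpFoot A₂ A₁ A₃ H₂ := ⟨hH₂mem, hH₂perp⟩
  have f₃ : IsPerpFoot A₃ A₁ A₂ H₃ := ⟨hH₃mem, hH₃perp⟩
  have cos_nonneg {x y z : EuclideanSpace ℝ (Fin 2)} (h : ∠ x y z < π / 2) :
      0 ≤ cos (∠ x y z) :=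
    cos_nonneg_of_neg_pi_div_two_le_of_le (by linarith [angle_nonneg x y z, pi_pos]) h.le
  rw [EuclideanGeometry.angle_comm] at hacute₁
  rw [f₁.symm.dist_eq_abs_cos_mul_dist h₂₃ h₁₃ f₂.symm,
    f₂.dist_eq_abs_cos_mul_dist h₁₃.symm h₁₂.symm f₃,
    f₃.symm.dist_eq_abs_cos_mul_dist h₁₂ h₂₃.symm f₁,
    abs_of_nonneg (cos_nonneg hacute₁), abs_of_nonneg (cos_nonneg hacute₂),
    abs_of_nonneg (cos_nonneg hacute₃), dist_comm A₂ A₁, dist_comm A₃ A₂, dist_comm A₁ A₃]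
  linarith [dist_mul_cos_add_dist_mul_cos_add_dist_mul_cos hT]
end

section
/- Let n ≥ 1, α = π/(2n+1), and let k be an integer with 1 ≤ k ≤ n and gcd(k, 2n+1) = 1. Then the real numbers sin(kα)/sin(α) and sin(kα)/sin(nα) are units in the ring of algebraic integers: each of these numbers and its multiplicative inverse sin(α)/sin(kα), respectively sin(nα)/sin(kα), is an algebraic integer. -/
/-!
The ratio `sin (m θ) / sin θ` is the Vieta–Fibonacci polynomial `S_{m-1}`, which has integer
coefficients, evaluated at `2 cos θ`; for `θ` a rational multiple of `π` this is an algebraic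
integer. With `α = π / N`, if `v c ≡ u (mod N)` then `u α` and `c (v α)` differ by a multiple of
`π`, so `sin (u α) / sin (v α) = ± sin (c (v α)) / sin (v α)` is an algebraic integer. Since `k`
and `n` are invertible modulo `2n + 1`, every ratio in the theorem has this form.
-/

open Real

open Polynomial in
theorem isIntegral_sin_int_mul_div_sin {θ : ℝ} (hθ : IsIntegral ℤ (2 * cos θ)) (m : ℤ) :
    IsIntegral ℤ (sin (m * θ) / sin θ) := by
  have hS : IsIntegral ℤ ((Chebyshev.S ℝ (m - 1)).eval (2 * cos θ)) := by
    rw [← Chebyshev.map_S (algebraMap ℤ ℝ), eval_map_algebraMap]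
    exact adjoin_le_integralClosure hθ (aeval_mem_adjoin_singleton ℤ _)
  rcases eq_or_ne (sin θ) 0 with h0 | h0
  · simpa [h0] using isIntegral_zero
  · have hU := Chebyshev.S_two_mul_real_cos θ (m - 1)
    rw [Int.cast_sub, Int.cast_one, sub_add_cancel] at hU
    rwa [← hU, mul_div_cancel_right₀ _ h0]

theorem isIntegral_sin_div_sin_of_modEq {N : ℕ} {u v c : ℤ} (h : v * c ≡ u [ZMOD N]) :
    IsIntegral ℤ (sin (u * (π / N)) / sin (v * (π / N))) := by
  rcases eq_or_ne N 0 with rfl | hN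
  · simpa using isIntegral_zero
  obtain ⟨t, ht⟩ := h.dvd
  have hcos : IsIntegral ℤ (2 * cos (v * (π / N))) := by
    convert isIntegral_two_mul_cos_rat_mul_pi (v / N) using 3
    push_cast
    ring
  have hsin : sin (u * (π / N)) = (-1) ^ t * sin (c * (v * (π / N))) := by
    rw [← sin_add_int_mul_pi]
    congr 1
    rw [show (u : ℝ) = v * c + N * t by exact_mod_cast eq_add_of_sub_eq' ht]
    field_simp
  have hsign : IsIntegral ℤ ((-1 : ℝ) ^ t) := by
    rw [← Int.cast_negOnePow]
    exact isIntegral_algebraMap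
  rw [hsin, mul_div_assoc]
  exact hsign.mul (isIntegral_sin_int_mul_div_sin hcos c)

theorem sine_ratios_are_units_general
    (n : ℕ) (k : ℕ)
    (hcop : Nat.gcd k (2 * n + 1) = 1) :
    IsIntegral ℤ (Real.sin (k * (π / (2 * n + 1))) / Real.sin (π / (2 * n + 1))) ∧
    IsIntegral ℤ (Real.sin (π / (2 * n + 1)) / Real.sin (k * (π / (2 * n + 1)))) ∧
    IsIntegral ℤ (Real.sin (k * (π / (2 * n + 1))) / Real.sin (n * (π / (2 * n + 1)))) ∧
    IsIntegral ℤ (Real.sin (n * (π / (2 * n + 1))) / Real.sin (k * (π / (2 * n + 1)))) := by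
  have key {u v : ℕ} {c : ℤ} (h : v * c ≡ u [ZMOD (2 * n + 1 : ℕ)]) :
      IsIntegral ℤ (sin (u * (π / (2 * n + 1))) / sin (v * (π / (2 * n + 1)))) := by
    simpa using isIntegral_sin_div_sin_of_modEq h
  obtain ⟨a, ha⟩ := Int.mod_coprime hcop
  obtain ⟨b, hb⟩ := Int.mod_coprime (by simp : n.Coprime (2 * n + 1))
  refine ⟨by simpa using key (u := k) (v := 1) (c := k) (by simp), by simpa using key ha,
    key (c := b * k) ?_, key (c := a * n) ?_⟩
  · simpa [← mul_assoc] using hb.mul_right k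
  · simpa [← mul_assoc] using ha.mul_right n

/-- Proposition 4.3 (2b): for `α = π/(2n+1)` and `1 ≤ k ≤ n` with `gcd(k, 2n+1) = 1`,
the numbers `sin(kα)/sin(α)` and `sin(kα)/sin(nα)` are units in the ring of algebraic
integers: they and their multiplicative inverses are algebraic integers. -/
theorem sine_ratios_are_units
    (n : ℕ) (hn : 1 ≤ n) (k : ℕ) (hk1 : 1 ≤ k) (hkn : k ≤ n)
    (hcop : Nat.gcd k (2 * n + 1) = 1) :
    IsIntegral ℤ (Real.sin (k * (π / (2 * n + 1))) / Real.sin (π / (2 * n + 1))) ∧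
    IsIntegral ℤ (Real.sin (π / (2 * n + 1)) / Real.sin (k * (π / (2 * n + 1)))) ∧
    IsIntegral ℤ (Real.sin (k * (π / (2 * n + 1))) / Real.sin (n * (π / (2 * n + 1)))) ∧
    IsIntegral ℤ (Real.sin (n * (π / (2 * n + 1))) / Real.sin (k * (π / (2 * n + 1)))) :=
  sine_ratios_are_units_general n k hcop
end

section
/- Let n ≥ 1, α = π/(2n+1), and let r, l be integers with 1 ≤ r ≤ n, 1 ≤ l ≤ n and gcd(l, 2n+1) = 1. Let K = ℚ(cos(2α)) ⊆ ℝ and let σ : K → ℝ be any ring homomorphism with σ(cos(2α)) = cos(2lα). Then 1/sin²(rα) belongs to K and σ(1/sin²(rα)) = 1/sin²(rlα). -/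
open Real

private lemma inv_sin_sq_eq (x : ℝ) : 1 / Real.sin x ^ 2 = 2 / (1 - Real.cos (2 * x)) := by
  have h : 1 - Real.cos (2 * x) = 2 * Real.sin x ^ 2 := by
    rw [Real.cos_two_mul]; nlinarith [Real.sin_sq_add_cos_sq x]
  rw [h, ← mul_div_mul_left 1 (Real.sin x ^ 2) (two_ne_zero (α := ℝ)), mul_one]

private lemma cheb_elt (x y : ℝ) (r : ℤ)
    (σ : (Subfield.closure {x} : Subfield ℝ) →+* ℝ)
    (hσ : σ ⟨x, Subfield.subset_closure (Set.mem_singleton _)⟩ = y) :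
    ∃ c : (Subfield.closure {x} : Subfield ℝ),
      (c : ℝ) = (Polynomial.Chebyshev.T ℝ r).eval x ∧
      σ c = (Polynomial.Chebyshev.T ℝ r).eval y := by
  have hmem : x ∈ Subfield.closure {x} := Subfield.subset_closure rfl
  refine ⟨(Polynomial.Chebyshev.T (Subfield.closure {x}) r).eval ⟨x, hmem⟩, ?_, ?_⟩
  · rw [← Polynomial.Chebyshev.map_T (Subfield.closure {x}).subtype r, Polynomial.eval_map]
    exact (Polynomial.eval₂_at_apply (Subfield.closure {x}).subtype _).symm
  · rw [← Polynomial.eval₂_at_apply σ, ← Polynomial.eval_map, Polynomial.Chebyshev.map_T, hσ]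

/-- Proposition 4.4: for `α = π/(2n+1)`, `1 ≤ r ≤ n`, `1 ≤ l ≤ n` with `gcd(l, 2n+1) = 1`,
and any ring homomorphism `σ` from `K = ℚ(cos 2α)` to `ℝ` with `σ(cos 2α) = cos 2lα`,
the element `1/sin²(rα)` belongs to `K` and `σ(1/sin²(rα)) = 1/sin²(rlα)`. -/
theorem galois_action_on_inverse_sine_squares
    (n : ℕ) (hn : 1 ≤ n) (r l : ℕ) (hr1 : 1 ≤ r) (hrn : r ≤ n)
    (hl1 : 1 ≤ l) (hln : l ≤ n) (hcop : Nat.gcd l (2 * n + 1) = 1)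
    (σ : (Subfield.closure {Real.cos (2 * (π / (2 * n + 1)))} : Subfield ℝ) →+* ℝ)
    (hσ : σ ⟨Real.cos (2 * (π / (2 * n + 1))),
        Subfield.subset_closure (Set.mem_singleton _)⟩ =
      Real.cos (2 * l * (π / (2 * n + 1)))) :
    ∃ h : 1 / Real.sin (r * (π / (2 * n + 1))) ^ 2 ∈
        Subfield.closure {Real.cos (2 * (π / (2 * n + 1)))},
      σ ⟨1 / Real.sin (r * (π / (2 * n + 1))) ^ 2, h⟩ =
        1 / Real.sin (r * l * (π / (2 * n + 1))) ^ 2 := by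
  obtain ⟨c, hcval, hσc⟩ := cheb_elt (Real.cos (2 * (π / (2 * n + 1))))
    (Real.cos (2 * l * (π / (2 * n + 1)))) (r : ℤ) σ hσ
  rw [Polynomial.Chebyshev.T_real_cos] at hcval hσc
  have hcval' : (c : ℝ) = Real.cos (2 * (r * (π / (2 * n + 1)))) := by
    rw [hcval]; push_cast; ring_nf
  have hσc' : σ c = Real.cos (2 * (r * l * (π / (2 * n + 1)))) := by
    rw [hσc]; push_cast; ring_nf
  set e := (2 : Subfield.closure {Real.cos (2 * (π / (2 * n + 1)))}) / (1 - c) with he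
  have heval : (e : ℝ) = 1 / Real.sin (r * (π / (2 * n + 1))) ^ 2 := by
    rw [inv_sin_sq_eq, he]
    push_cast
    rw [hcval']; norm_cast
  have h : 1 / Real.sin (r * (π / (2 * n + 1))) ^ 2 ∈
      Subfield.closure {Real.cos (2 * (π / (2 * n + 1)))} := heval ▸ e.2
  refine ⟨h, ?_⟩
  have heq : (⟨1 / Real.sin (r * (π / (2 * n + 1))) ^ 2, h⟩ :
      Subfield.closure {Real.cos (2 * (π / (2 * n + 1)))}) = e := by
    ext; rw [heval]
  rw [heq, he, map_div₀, map_sub, map_one, map_ofNat, hσc',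
    ← inv_sin_sq_eq (r * l * (π / (2 * n + 1)))]
end

section
/- (Verlinde formula) For every natural number n ≥ 1, ∑_{k=1}^{n} 1/sin²(kπ/(2n+1)) = (2/3)·n·(n+1). -/
/-!
Put `ζ = exp (2πi/N)`. Then `4 sin² (kπ/N) = (1 - ζ^k) (1 - ζ^{-k})`, and for `ζ^k ≠ 1` the inverse of
`1 - ζ^k` is `-(1/N) ∑ j ζ^{jk}`, the discrete Fourier transform of `j ↦ j`. Parseval's identity
over the `N`-th roots of unity, with the `k = 0` term removed, gives
`∑_{k=1}^{N-1} 1 / sin² (kπ/N) = (4/N²) (N ∑ j² - (∑ j)²) = (N² - 1)/3`.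
For `N = 2n + 1` the terms `k` and `N - k` agree, so the sum over `1 ≤ k ≤ n` is half of this.
-/

open Real Finset

section NatCastSums

variable {R : Type*} [CommRing R]

lemma two_mul_sum_range_natCast (N : ℕ) : 2 * ∑ j ∈ range N, (j : R) = N * (N - 1) := by
  induction N with
  | zero => simp
  | succ N ih => rw [sum_range_succ, mul_add, ih]; push_cast; ring

lemma six_mul_sum_range_natCast_sq (N : ℕ) :
    6 * ∑ j ∈ range N, (j : R) ^ 2 = N * (N - 1) * (2 * N - 1) := by
  induction N with
  | zero => simp
  | succ N ih => rw [sum_range_succ, mul_add, ih]; push_cast; ring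

end NatCastSums

lemma Finset.sum_Icc_two_mul_eq_two_smul {M : Type*} [AddCommMonoid M] {f : ℕ → M} {n : ℕ}
    (hf : ∀ k ∈ Icc 1 n, f (2 * n + 1 - k) = f k) :
    ∑ k ∈ Icc 1 (2 * n), f k = 2 • ∑ k ∈ Icc 1 n, f k := by
  have hsplit : Icc 1 (2 * n) = Icc 1 n ∪ Icc (n + 1) (2 * n) := by
    ext k; simp only [mem_union, mem_Icc]; omega
  have hdisj : Disjoint (Icc 1 n) (Icc (n + 1) (2 * n)) := disjoint_left.2 fun k hk hk' => by
    simp only [mem_Icc] at hk hk'; omega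
  have hreflect : ∑ k ∈ Icc (n + 1) (2 * n), f k = ∑ k ∈ Icc 1 n, f k := by
    refine sum_nbij' (fun k => 2 * n + 1 - k) (fun k => 2 * n + 1 - k) ?_ ?_ ?_ ?_ ?_ <;>
      intro k hk <;> simp only [mem_Icc] at hk ⊢
    · omega
    · omega
    · omega
    · omega
    · have := hf (2 * n + 1 - k) (mem_Icc.2 (by omega))
      rwa [Nat.sub_sub_self (by omega)] at this
  rw [hsplit, sum_union hdisj, hreflect, two_smul]

section Field

variable {K : Type*} [Field K]

lemma sum_range_natCast_mul_pow_mul_sub_one {x : K} {N : ℕ} (hxN : x ^ N = 1) (hx : x ≠ 1) :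
    (∑ j ∈ range N, (j : K) * x ^ j) * (x - 1) = N := by
  have hgeom : ∑ j ∈ range N, x ^ j = 0 := by rw [geom_sum_eq hx, hxN, sub_self, zero_div]
  calc (∑ j ∈ range N, (j : K) * x ^ j) * (x - 1)
      = ∑ j ∈ range N, (((j + 1 : ℕ) : K) * x ^ (j + 1) - j * x ^ j) - ∑ j ∈ range N, x ^ j * x := by
        rw [sum_mul, ← sum_sub_distrib]
        refine sum_congr rfl fun j _ => ?_
        push_cast; ring
    _ = N := by rw [sum_range_sub (fun j => (j : K) * x ^ j), ← sum_mul, hgeom, hxN]; simp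

namespace IsPrimitiveRoot

variable {ζ : K} {N : ℕ}

lemma geom_sum_pow_mul_inv_pow (h : IsPrimitiveRoot ζ N) {j l : ℕ} (hj : j < N) (hl : l < N) :
    ∑ k ∈ range N, (ζ ^ j * ζ⁻¹ ^ l) ^ k = if j = l then (N : K) else 0 := by
  have hζ : ζ ≠ 0 := h.ne_zero (by omega)
  split_ifs with hjl
  · subst hjl
    simp [inv_pow, mul_inv_cancel₀ (pow_ne_zero j hζ)]
  · have hx : ζ ^ j * ζ⁻¹ ^ l = ζ ^ ((j : ℤ) - l) := by
      rw [zpow_sub₀ hζ, zpow_natCast, zpow_natCast, inv_pow, div_eq_mul_inv]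
    have hx1 : ζ ^ ((j : ℤ) - l) ≠ 1 := by
      rw [Ne, h.zpow_eq_one_iff_dvd]
      intro hdvd
      have := Int.eq_zero_of_abs_lt_dvd hdvd (abs_lt.2 ⟨by omega, by omega⟩)
      omega
    rw [hx, geom_sum_eq hx1, ← zpow_natCast, ← zpow_mul, mul_comm, zpow_mul, zpow_natCast,
      h.pow_eq_one, one_zpow, sub_self, zero_div]

/-- Parseval's identity for the discrete Fourier transform of length `N`. -/
lemma sum_range_mul_sum_range_inv (h : IsPrimitiveRoot ζ N) (a b : ℕ → K) :
    ∑ k ∈ range N, (∑ j ∈ range N, a j * (ζ ^ k) ^ j) * (∑ l ∈ range N, b l * (ζ⁻¹ ^ k) ^ l) =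
      N * ∑ j ∈ range N, a j * b j := by
  calc _ = ∑ j ∈ range N, ∑ l ∈ range N, a j * b l * ∑ k ∈ range N, (ζ ^ j * ζ⁻¹ ^ l) ^ k := by
        simp_rw [sum_mul_sum, mul_sum]
        rw [sum_comm]
        refine sum_congr rfl fun j _ => ?_
        rw [sum_comm]
        refine sum_congr rfl fun l _ => sum_congr rfl fun k _ => ?_
        rw [mul_pow, ← pow_mul, ← pow_mul, ← pow_mul, ← pow_mul]
        ring_nf
    _ = N * ∑ j ∈ range N, a j * b j := by
        rw [mul_sum]
        refine sum_congr rfl fun j hj => ?_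
        rw [sum_congr rfl fun l hl =>
          by rw [h.geom_sum_pow_mul_inv_pow (mem_range.1 hj) (mem_range.1 hl)]]
        simp_rw [mul_ite, mul_zero]
        rw [sum_ite_eq, if_pos hj]
        ring

lemma inv_one_sub_pow_mul_one_sub_inv_pow [CharZero K] (h : IsPrimitiveRoot ζ N) {k : ℕ}
    (hk : k ∈ Ico 1 N) :
    ((1 - ζ ^ k) * (1 - ζ⁻¹ ^ k))⁻¹ =
      (∑ j ∈ range N, (j : K) * (ζ ^ k) ^ j) * (∑ j ∈ range N, (j : K) * (ζ⁻¹ ^ k) ^ j) / N ^ 2 := by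
  obtain ⟨hk1, hkN⟩ := mem_Ico.1 hk
  have hroot {x : K} (hx : IsPrimitiveRoot x N) : (x ^ k) ^ N = 1 := by
    rw [← pow_mul, mul_comm, pow_mul, hx.pow_eq_one, one_pow]
  have hne {x : K} (hx : IsPrimitiveRoot x N) : x ^ k ≠ 1 :=
    hx.pow_ne_one_of_pos_of_lt (by omega) hkN
  have hN : (N : K) ≠ 0 := Nat.cast_ne_zero.2 (by omega)
  have hinv : IsPrimitiveRoot ζ⁻¹ N := h.inv
  have hprod : (1 - ζ ^ k) * (1 - ζ⁻¹ ^ k) ≠ 0 :=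
    mul_ne_zero (sub_ne_zero.2 (hne h).symm) (sub_ne_zero.2 (hne hinv).symm)
  have key : (1 - ζ ^ k) * (1 - ζ⁻¹ ^ k) *
      ((∑ j ∈ range N, (j : K) * (ζ ^ k) ^ j) * (∑ j ∈ range N, (j : K) * (ζ⁻¹ ^ k) ^ j)) =
        N ^ 2 := by
    calc _ = ((∑ j ∈ range N, (j : K) * (ζ ^ k) ^ j) * (ζ ^ k - 1)) *
          ((∑ j ∈ range N, (j : K) * (ζ⁻¹ ^ k) ^ j) * (ζ⁻¹ ^ k - 1)) := by ring
      _ = N ^ 2 := by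
        rw [sum_range_natCast_mul_pow_mul_sub_one (hroot h) (hne h),
          sum_range_natCast_mul_pow_mul_sub_one (hroot hinv) (hne hinv), sq]
  rw [eq_div_iff (pow_ne_zero 2 hN), ← key,
    inv_mul_cancel_left₀ hprod]

lemma sum_Ico_inv_one_sub_pow_mul_one_sub_inv_pow [CharZero K] (h : IsPrimitiveRoot ζ N)
    (hN : N ≠ 0) :
    ∑ k ∈ Ico 1 N, ((1 - ζ ^ k) * (1 - ζ⁻¹ ^ k))⁻¹ = ((N : K) ^ 2 - 1) / 12 := by
  have hparseval := h.sum_range_mul_sum_range_inv (fun j => (j : K)) (fun j => (j : K))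
  rw [sum_range_eq_add_Ico _ (Nat.pos_of_ne_zero hN)] at hparseval
  rw [sum_congr rfl fun k hk => h.inv_one_sub_pow_mul_one_sub_inv_pow hk, ← sum_div]
  simp only [pow_zero, one_pow, mul_one] at hparseval
  have h1 := two_mul_sum_range_natCast (R := K) N
  have h2 := six_mul_sum_range_natCast_sq (R := K) N
  rw [div_eq_div_iff (by simp [hN]) (by norm_num)]
  simp only [← sq] at hparseval
  linear_combination (12 : K) * hparseval + 2 * (N : K) * h2 -
    3 * (2 * ∑ j ∈ range N, (j : K) + N * (N - 1)) * h1

end IsPrimitiveRoot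

end Field

lemma Complex.one_sub_exp_mul_one_sub_exp_neg (z : ℂ) :
    (1 - Complex.exp (2 * z * Complex.I)) * (1 - Complex.exp (-(2 * z * Complex.I))) =
      4 * Complex.sin z ^ 2 := by
  have hexp : Complex.exp (z * Complex.I) * Complex.exp (-z * Complex.I) = 1 := by
    rw [← Complex.exp_add]; simp
  rw [Complex.sin, show 2 * z * Complex.I = z * Complex.I + z * Complex.I by ring,
    show -(z * Complex.I + z * Complex.I) = -z * Complex.I + -z * Complex.I by ring,
    Complex.exp_add, Complex.exp_add]
  linear_combination (Complex.exp (z * Complex.I) * Complex.exp (-z * Complex.I) - 1) * hexp -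
    (Complex.exp (-z * Complex.I) - Complex.exp (z * Complex.I)) ^ 2 * Complex.I_sq

lemma Real.sum_Ico_one_div_sin_sq {N : ℕ} (hN : N ≠ 0) :
    ∑ k ∈ Ico 1 N, 1 / sin (k * π / N) ^ 2 = ((N : ℝ) ^ 2 - 1) / 3 := by
  have hζ := Complex.isPrimitiveRoot_exp N hN
  have hterm : ∀ k : ℕ, (1 - Complex.exp (2 * π * Complex.I / N) ^ k) *
      (1 - (Complex.exp (2 * π * Complex.I / N))⁻¹ ^ k) = 4 * Complex.sin (k * π / N) ^ 2 := by
    intro k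
    rw [← Complex.exp_neg, ← Complex.exp_nat_mul, ← Complex.exp_nat_mul, mul_neg,
      show (k : ℂ) * (2 * π * Complex.I / N) = 2 * (k * π / N) * Complex.I by ring,
      Complex.one_sub_exp_mul_one_sub_exp_neg]
  apply Complex.ofReal_injective
  push_cast
  calc ∑ k ∈ Ico 1 N, 1 / Complex.sin (k * π / N) ^ 2
      = 4 * ∑ k ∈ Ico 1 N, (4 * Complex.sin (k * π / N) ^ 2)⁻¹ := by
        rw [mul_sum]
        refine sum_congr rfl fun k _ => ?_
        rw [mul_inv, ← mul_assoc, mul_inv_cancel₀ (by norm_num : (4 : ℂ) ≠ 0), one_mul, one_div]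
    _ = ((N : ℂ) ^ 2 - 1) / 3 := by
        simp_rw [← hterm]
        rw [hζ.sum_Ico_inv_one_sub_pow_mul_one_sub_inv_pow hN]
        ring

theorem verlinde_formula_general (n : ℕ) :
    ∑ k ∈ Finset.Icc 1 n, 1 / Real.sin (k * π / (2 * n + 1)) ^ 2 =
      2 / 3 * (n : ℝ) * ((n : ℝ) + 1) := by
  have hreflect : ∀ k ∈ Icc 1 n, 1 / sin (↑(2 * n + 1 - k) * π / (2 * n + 1)) ^ 2 =
      1 / sin (k * π / (2 * n + 1)) ^ 2 := by
    intro k hk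
    rw [Nat.cast_sub (by simp only [mem_Icc] at hk; omega), ← sin_pi_sub]
    congr 3
    field_simp
    push_cast
    ring
  have htotal := Real.sum_Ico_one_div_sin_sq (N := 2 * n + 1) (by omega)
  push_cast at htotal
  rw [Finset.Ico_add_one_right_eq_Icc, Finset.sum_Icc_two_mul_eq_two_smul hreflect] at htotal
  linear_combination htotal / 2

/-- Verlinde formula (Proposition 5.1): `∑_{k=1}^{n} 1/sin²(kπ/(2n+1)) = (2/3)n(n+1)`. -/
theorem verlinde_formula (n : ℕ) (hn : 1 ≤ n) :
    ∑ k ∈ Finset.Icc 1 n, 1 / Real.sin (k * π / (2 * n + 1)) ^ 2 =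
      2 / 3 * (n : ℝ) * ((n : ℝ) + 1) :=
  verlinde_formula_general n
end

section
/- For every natural number n ≥ 1, ∑_{k=2}^{n} 1/sin²(kπ/(2n+1)) < 1/sin²(π/(2n+1)). (For n = 1 the left-hand side is the empty sum 0.) -/
open Real Finset

lemma csc_sq_lt (x : ℝ) (hx : 0 < x) (hx2 : x < π / 2) :
    1 / Real.sin x ^ 2 < 1 / x ^ 2 + 1 := by
  have hs : 0 < Real.sin x := Real.sin_pos_of_pos_of_lt_pi hx (hx2.trans (by linarith [Real.pi_pos]))
  have hc : 0 < Real.cos x := Real.cos_pos_of_mem_Ioo ⟨by linarith, hx2⟩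
  have ht : x < Real.tan x := Real.lt_tan hx hx2
  rw [Real.tan_eq_sin_div_cos, lt_div_iff₀ hc] at ht
  have key : x ^ 2 * Real.cos x ^ 2 < Real.sin x ^ 2 := by
    nlinarith [mul_pos (sub_pos.mpr ht) (add_pos hs (mul_pos hx hc))]
  have hpyth := Real.sin_sq_add_cos_sq x
  rw [div_add' _ _ _ (by positivity), div_lt_div_iff₀ (by positivity) (by positivity)]
  nlinarith

lemma sum_inv_sq_le (n : ℕ) (hn : 1 ≤ n) :
    ∑ k ∈ Finset.Icc 2 n, (1 : ℝ) / (k : ℝ) ^ 2 ≤ 2 / 3 - 2 / (2 * (n : ℝ) + 1) := by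
  induction n, hn using Nat.le_induction with
  | base => norm_num
  | succ n hn ih =>
    rw [Finset.sum_Icc_succ_top (by omega)]
    have h1 : (0 : ℝ) < 2 * (n : ℝ) + 1 := by positivity
    have h2 : (0 : ℝ) < 2 * ((n : ℝ) + 1) + 1 := by positivity
    have h3 : (1 : ℝ) / ((n : ℝ) + 1) ^ 2 ≤ 2 / (2 * (n : ℝ) + 1) - 2 / (2 * ((n : ℝ) + 1) + 1) := by
      rw [div_sub_div _ _ (ne_of_gt h1) (ne_of_gt h2), div_le_div_iff₀ (by positivity) (by positivity)]
      nlinarith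
    push_cast
    linarith

/-- Lemma 5.2: `∑_{k=2}^{n} 1/sin²(kπ/(2n+1)) < 1/sin²(π/(2n+1))`. -/
theorem sum_inv_sin_sq_tail_lt (n : ℕ) (hn : 1 ≤ n) :
    ∑ k ∈ Finset.Icc 2 n, 1 / Real.sin (k * π / (2 * n + 1)) ^ 2 <
      1 / Real.sin (π / (2 * n + 1)) ^ 2 := by
  have hpi := Real.pi_pos
  have hN : (0 : ℝ) < 2 * (n : ℝ) + 1 := by positivity
  -- per-term bound
  have step1 : ∑ k ∈ Finset.Icc 2 n, 1 / Real.sin (k * π / (2 * n + 1)) ^ 2 ≤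
      ∑ k ∈ Finset.Icc 2 n, (((2 * (n : ℝ) + 1) / π) ^ 2 * ((1 : ℝ) / (k : ℝ) ^ 2) + 1) := by
    apply Finset.sum_le_sum
    intro k hk
    obtain ⟨hk2, hkn⟩ := Finset.mem_Icc.mp hk
    have hk0 : (0 : ℝ) < (k : ℝ) := by positivity
    have hx : (0 : ℝ) < (k : ℝ) * π / (2 * (n : ℝ) + 1) := by positivity
    have hkn' : (k : ℝ) ≤ (n : ℝ) := by exact_mod_cast hkn
    have hx2 : (k : ℝ) * π / (2 * (n : ℝ) + 1) < π / 2 := by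
      rw [div_lt_div_iff₀ hN (by norm_num)]
      nlinarith
    have h := csc_sq_lt _ hx hx2
    have heq : 1 / ((k : ℝ) * π / (2 * (n : ℝ) + 1)) ^ 2 =
        ((2 * (n : ℝ) + 1) / π) ^ 2 * ((1 : ℝ) / (k : ℝ) ^ 2) := by
      field_simp
    rw [heq] at h
    exact h.le
  -- sum of the bound
  have card_eq : (Finset.Icc 2 n).card = n - 1 := by
    rw [Nat.card_Icc]; omega
  have step2 : ∑ k ∈ Finset.Icc 2 n, (((2 * (n : ℝ) + 1) / π) ^ 2 * ((1 : ℝ) / (k : ℝ) ^ 2) + 1) =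
      ((2 * (n : ℝ) + 1) / π) ^ 2 * (∑ k ∈ Finset.Icc 2 n, (1 : ℝ) / (k : ℝ) ^ 2) + ((n : ℝ) - 1) := by
    rw [Finset.sum_add_distrib, ← Finset.mul_sum, Finset.sum_const, card_eq, nsmul_eq_mul]
    have : ((n - 1 : ℕ) : ℝ) = (n : ℝ) - 1 := by
      have : 1 ≤ n := hn
      push_cast [Nat.cast_sub this]
      ring
    rw [this]
    ring
  have hC : (0 : ℝ) ≤ ((2 * (n : ℝ) + 1) / π) ^ 2 := by positivity
  have step3 : ((2 * (n : ℝ) + 1) / π) ^ 2 * (∑ k ∈ Finset.Icc 2 n, (1 : ℝ) / (k : ℝ) ^ 2) + ((n : ℝ) - 1) ≤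
      ((2 * (n : ℝ) + 1) / π) ^ 2 * (2 / 3 - 2 / (2 * (n : ℝ) + 1)) + ((n : ℝ) - 1) := by
    have := sum_inv_sq_le n hn
    nlinarith [mul_le_mul_of_nonneg_left this hC]
  -- arithmetic: the bound is < ((2n+1)/π)^2
  have hn1 : (1 : ℝ) ≤ (n : ℝ) := by exact_mod_cast hn
  have step4 : ((2 * (n : ℝ) + 1) / π) ^ 2 * (2 / 3 - 2 / (2 * (n : ℝ) + 1)) + ((n : ℝ) - 1) <
      ((2 * (n : ℝ) + 1) / π) ^ 2 := by
    have hpi2 : π ^ 2 < 10 := by nlinarith [Real.pi_lt_d2]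
    have hkey : (2 * (n : ℝ) + 1) ^ 2 * (2 / 3 - 2 / (2 * (n : ℝ) + 1)) + ((n : ℝ) - 1) * π ^ 2 <
        (2 * (n : ℝ) + 1) ^ 2 := by
      have hdiv : (2 * (n : ℝ) + 1) ^ 2 * (2 / 3 - 2 / (2 * (n : ℝ) + 1)) =
          (2 / 3) * (2 * (n : ℝ) + 1) ^ 2 - 2 * (2 * (n : ℝ) + 1) := by
        field_simp
      rw [hdiv]
      nlinarith [mul_le_mul_of_nonneg_left hpi2.le (sub_nonneg.mpr hn1),
        sq_nonneg (2 * (n : ℝ) - 7 / 2)]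
    have hexp : ((2 * (n : ℝ) + 1) / π) ^ 2 = (2 * (n : ℝ) + 1) ^ 2 / π ^ 2 := by
      rw [div_pow]
    have h9 : ((2 * (n : ℝ) + 1) / π) ^ 2 * (2 / 3 - 2 / (2 * (n : ℝ) + 1)) + ((n : ℝ) - 1) =
        ((2 * (n : ℝ) + 1) ^ 2 * (2 / 3 - 2 / (2 * (n : ℝ) + 1)) + ((n : ℝ) - 1) * π ^ 2) / π ^ 2 := by
      field_simp
    rw [h9, hexp]
    exact div_lt_div_of_pos_right hkey (by positivity) |>.trans_le le_rfl
  -- final: 1/θ² < 1/sin²θ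
  have hθ : (0 : ℝ) < π / (2 * (n : ℝ) + 1) := by positivity
  have hθpi : π / (2 * (n : ℝ) + 1) < π := by
    rw [div_lt_iff₀ hN]; nlinarith
  have hsθ : 0 < Real.sin (π / (2 * (n : ℝ) + 1)) := Real.sin_pos_of_pos_of_lt_pi hθ hθpi
  have hslt : Real.sin (π / (2 * (n : ℝ) + 1)) < π / (2 * (n : ℝ) + 1) := Real.sin_lt hθ
  have step5 : ((2 * (n : ℝ) + 1) / π) ^ 2 < 1 / Real.sin (π / (2 * (n : ℝ) + 1)) ^ 2 := by
    have h1 : ((2 * (n : ℝ) + 1) / π) ^ 2 = 1 / (π / (2 * (n : ℝ) + 1)) ^ 2 := by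
      rw [one_div, ← inv_pow, inv_div]
    rw [h1, div_lt_div_iff₀ (by positivity) (by positivity)]
    nlinarith
  push_cast
  calc ∑ k ∈ Finset.Icc 2 n, 1 / Real.sin (k * π / (2 * n + 1)) ^ 2
      ≤ _ := step1
    _ = _ := step2
    _ ≤ _ := step3
    _ < _ := step4
    _ < _ := step5
end

section
/- (Dedekind's group determinant factorization for abelian groups) Let G be a finite abelian group and let a : G → ℂ be any function. Consider the G×G complex matrix M with entries M_{g,h} = a(g·h⁻¹). Then det(M) = ∏_χ ( ∑_{g ∈ G} χ(g)·a(g) ), where the product runs over all characters χ of G, i.e. all group homomorphisms χ : G → ℂˣ. -/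
/-!
The group matrix `(a (g * h⁻¹))_{g,h}` acts on `G → ℂ` by convolution with `a`, so every character
`χ` is an eigenvector, with eigenvalue `∑ₖ χ(k)⁻¹ a(k)`. Since `G` has exactly `|G|` characters and
they are linearly independent (Dedekind), they form an eigenbasis, and the determinant is the
product of the eigenvalues; replacing `χ` by `χ⁻¹` gives the stated product.
-/

open Finset

open Matrix in
theorem Matrix.det_eq_prod_of_basis_mulVec_eq_smul {n ι R : Type*} [Fintype n] [DecidableEq n]
    [Fintype ι] [DecidableEq ι] [CommRing R] (A : Matrix n n R) (b : Module.Basis ι R (n → R))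
    (μ : ι → R) (h : ∀ i, A *ᵥ b i = μ i • b i) : A.det = ∏ i, μ i := by
  have hdiag : LinearMap.toMatrix b b (Matrix.toLin' A) = diagonal μ := by
    ext i j
    rw [LinearMap.toMatrix_apply, Matrix.toLin'_apply, h, map_smul, b.repr_self,
      Finsupp.smul_apply, Finsupp.single_apply, diagonal_apply]
    split_ifs <;> simp_all [eq_comm]
  rw [← LinearMap.det_toLin', ← LinearMap.det_toMatrix b, hdiag, det_diagonal]

theorem linearIndependent_monoidHom_units (M K : Type*) [Monoid M] [CommRing K] [IsDomain K] :
    LinearIndependent K fun (χ : M →* Kˣ) g => (χ g : K) := by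
  have hinj : Function.Injective fun χ : M →* Kˣ => (Units.coeHom K).comp χ :=
    fun _ _ h => MonoidHom.ext fun g => Units.ext (DFunLike.congr_fun h g)
  exact (linearIndependent_monoidHom M K).comp _ hinj

noncomputable def characterBasis (G K : Type*) [CommGroup G] [Fintype G] [Field K]
    [HasEnoughRootsOfUnity K (Monoid.exponent G)] [Fintype (G →* Kˣ)] :
    Module.Basis (G →* Kˣ) K (G → K) :=
  basisOfLinearIndependentOfCardEqFinrank (linearIndependent_monoidHom_units G K) <| by
    rw [Module.finrank_fintype_fun_eq_card, Fintype.card_eq_nat_card, Fintype.card_eq_nat_card,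
      CommGroup.card_monoidHom_of_hasEnoughRootsOfUnity]

theorem coe_characterBasis (G K : Type*) [CommGroup G] [Fintype G] [Field K]
    [HasEnoughRootsOfUnity K (Monoid.exponent G)] [Fintype (G →* Kˣ)] :
    ⇑(characterBasis G K) = fun (χ : G →* Kˣ) g => (χ g : K) :=
  coe_basisOfLinearIndependentOfCardEqFinrank _ _

section GroupMatrix

variable {G R : Type*} [CommGroup G]

def groupMatrix (a : G → R) : Matrix G G R := Matrix.of fun g h => a (g * h⁻¹)

open Matrix in
theorem groupMatrix_mulVec_character [Fintype G] [CommRing R] (a : G → R) (χ : G →* Rˣ) :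
    groupMatrix a *ᵥ (fun g => (χ g : R)) = (∑ k, (χ⁻¹ k : R) * a k) • fun g => (χ g : R) := by
  ext g
  simp only [mulVec, dotProduct, groupMatrix, of_apply, Pi.smul_apply, smul_eq_mul, sum_mul]
  refine Fintype.sum_equiv ((Equiv.inv G).trans (Equiv.mulLeft g)) _ _ fun h => ?_
  have hχ : χ⁻¹ (g * h⁻¹) * χ g = χ h := by
    rw [MonoidHom.inv_apply, ← map_inv, ← map_mul]
    group
  change a (g * h⁻¹) * χ h = χ⁻¹ (g * h⁻¹) * a (g * h⁻¹) * χ g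
  rw [← hχ, Units.val_mul]
  ring

theorem det_groupMatrix {K : Type*} [Fintype G] [DecidableEq G] [Field K]
    [HasEnoughRootsOfUnity K (Monoid.exponent G)] (a : G → K) :
    (groupMatrix a).det = ∏ᶠ χ : G →* Kˣ, ∑ g, (χ g : K) * a g := by
  classical
  have := Fintype.ofFinite (G →* Kˣ)
  rw [finprod_eq_prod_of_fintype, (groupMatrix a).det_eq_prod_of_basis_mulVec_eq_smul
    (characterBasis G K) _ fun χ => by simpa only [coe_characterBasis]
      using groupMatrix_mulVec_character a χ]
  exact Equiv.prod_comp (Equiv.inv (G →* Kˣ)) fun χ => ∑ g, (χ g : K) * a g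

end GroupMatrix

/-- Dedekind's factorization of the group determinant of a finite abelian group: for any
function `a : G → ℂ`, the determinant of the matrix `(a(g·h⁻¹))_{g,h}` is the product, over
all characters `χ : G →* ℂˣ`, of `∑_{g ∈ G} χ(g)·a(g)`. -/
theorem dedekind_group_determinant (G : Type*) [CommGroup G] [Fintype G] [DecidableEq G]
    (a : G → ℂ) :
    (Matrix.of fun g h : G => a (g * h⁻¹)).det =
      ∏ᶠ χ : G →* ℂˣ, ∑ g : G, (χ g : ℂ) * a g :=
  det_groupMatrix a
end

section
/- Let n ≥ 1, α = π/(2n+1), and U = {k ∈ ℕ : 1 ≤ k ≤ n and gcd(k, 2n+1) = 1}. Let c : U → ℂ be any function with |c(k)| ≤ 1 for all k ∈ U and c(1) = 1. Then ∑_{k ∈ U} c(k)/sin²(kα) ≠ 0. -/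
/-!
With `α = π/(2n+1)`, the term `k = 1` has modulus `1/sin²α ≥ 1/α²`. All other terms have
`kα ∈ (0, π/2)`, where `cos x ≤ 1/√(1+x²)` gives `1/sin²x ≤ 1/x² + 1`; together with
`∑_{k=2}^n 1/k² ≤ 2/3 - 2/(2n+1)` their moduli add up to less than `1/α²`, so the sum
cannot vanish.
-/

open Real Finset

lemma one_div_sin_sq_le_one_div_sq_add_one {x : ℝ} (h0 : 0 < x) (h : x ≤ π / 2) :
    1 / sin x ^ 2 ≤ 1 / x ^ 2 + 1 := by
  have hcos : 0 ≤ cos x := cos_nonneg_of_mem_Icc ⟨by linarith [pi_pos], h⟩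
  have hsin : 0 < sin x := sin_pos_of_pos_of_lt_pi h0 (by linarith [pi_pos])
  have hcos_sq : cos x ^ 2 ≤ 1 / (x ^ 2 + 1) := by
    calc cos x ^ 2 ≤ (1 / √(x ^ 2 + 1)) ^ 2 :=
          pow_le_pow_left₀ hcos
            (cos_le_one_div_sqrt_sq_add_one (by linarith [pi_pos]) (by linarith [pi_pos])) 2
      _ = 1 / (x ^ 2 + 1) := by rw [div_pow, sq_sqrt (by positivity), one_pow]
  have hsin_sq : x ^ 2 / (x ^ 2 + 1) ≤ sin x ^ 2 := by
    rw [sin_sq]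
    calc x ^ 2 / (x ^ 2 + 1) = 1 - 1 / (x ^ 2 + 1) := by field_simp; ring
      _ ≤ 1 - cos x ^ 2 := by linarith
  calc 1 / sin x ^ 2 ≤ 1 / (x ^ 2 / (x ^ 2 + 1)) :=
        one_div_le_one_div_of_le (by positivity) hsin_sq
    _ = 1 / x ^ 2 + 1 := by field_simp; ring

lemma sum_Icc_two_one_div_sq_le {n : ℕ} (hn : 1 ≤ n) :
    ∑ k ∈ Icc 2 n, 1 / (k : ℝ) ^ 2 ≤ 2 / 3 - 2 / (2 * (n : ℝ) + 1) := by
  induction n, hn using Nat.le_induction with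
  | base => norm_num
  | succ m hm ih =>
    rw [sum_Icc_succ_top (by omega)]
    -- telescoping: `1/k² < 1/(k - 1/2) - 1/(k + 1/2)`
    have hstep : 1 / ((m : ℝ) + 1) ^ 2 ≤ 2 / (2 * m + 1) - 2 / (2 * (m + 1) + 1) := by
      rw [div_sub_div _ _ (by positivity) (by positivity),
        div_le_div_iff₀ (by positivity) (by positivity)]
      nlinarith
    push_cast
    linarith

lemma norm_le_sum_erase_norm_of_sum_eq_zero {ι E : Type*} [SeminormedAddCommGroup E]
    [DecidableEq ι] {s : Finset ι} {f : ι → E} (h : ∑ i ∈ s, f i = 0) {a : ι} (ha : a ∈ s) :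
    ‖f a‖ ≤ ∑ i ∈ s.erase a, ‖f i‖ := by
  have hfa : f a = -∑ i ∈ s.erase a, f i :=
    eq_neg_of_add_eq_zero_left (by rwa [add_sum_erase s f ha])
  rw [hfa, norm_neg]
  exact norm_sum_le _ _

lemma norm_div_ofReal_sq_le {z : ℂ} (hz : ‖z‖ ≤ 1) (s : ℝ) : ‖z / (s : ℂ) ^ 2‖ ≤ 1 / s ^ 2 := by
  rw [norm_div, norm_pow, Complex.norm_real, norm_eq_abs, sq_abs]
  exact div_le_div_of_nonneg_right hz (sq_nonneg s)

lemma natCast_mul_pi_div_mem_Ioo {n k : ℕ} (hk : 1 ≤ k) (hkn : k ≤ n) :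
    (k : ℝ) * (π / (2 * n + 1)) ∈ Set.Ioo 0 (π / 2) := by
  have hk' : (1 : ℝ) ≤ k := by exact_mod_cast hk
  have hkn' : (k : ℝ) ≤ n := by exact_mod_cast hkn
  refine ⟨by positivity, ?_⟩
  rw [← mul_div_assoc, div_lt_div_iff₀ (by positivity) two_pos]
  nlinarith [pi_pos]

lemma sum_Icc_two_one_div_sin_sq_lt {n : ℕ} (hn : 1 ≤ n) :
    ∑ k ∈ Icc 2 n, 1 / sin (k * (π / (2 * n + 1))) ^ 2 < 1 / (π / (2 * n + 1)) ^ 2 := by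
  set α := π / (2 * n + 1) with hα
  calc ∑ k ∈ Icc 2 n, 1 / sin (k * α) ^ 2
      ≤ ∑ k ∈ Icc 2 n, (1 / α ^ 2 * (1 / (k : ℝ) ^ 2) + 1) := by
        refine sum_le_sum fun k hk => ?_
        obtain ⟨hk2, hkn⟩ := mem_Icc.1 hk
        obtain ⟨h0, hlt⟩ := natCast_mul_pi_div_mem_Ioo (n := n) (by omega : 1 ≤ k) hkn
        exact (one_div_sin_sq_le_one_div_sq_add_one h0 hlt.le).trans_eq (by ring)
    _ = 1 / α ^ 2 * ∑ k ∈ Icc 2 n, 1 / (k : ℝ) ^ 2 + (n - 1) := by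
        rw [sum_add_distrib, ← mul_sum, sum_const, Nat.card_Icc, nsmul_one,
          Nat.cast_sub (by omega)]
        push_cast
        ring
    _ ≤ 1 / α ^ 2 * (2 / 3 - 2 / (2 * n + 1)) + (n - 1) := by
        gcongr
        exact sum_Icc_two_one_div_sq_le hn
    _ < 1 / α ^ 2 := by
        -- with `π² < 10` this reduces to `4n² - 14n + 37 > 0`
        have hπ : π ^ 2 < 10 := by nlinarith [pi_lt_d2, pi_pos]
        rw [hα, div_pow, one_div_div, ← sub_pos]
        field_simp
        nlinarith [sq_nonneg ((n : ℝ) - 2)]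

/-- The key nonvanishing step in the proof of Theorem 6.4: for `α = π/(2n+1)` and any
complex coefficients `c k` of absolute value at most `1` with `c 1 = 1`, the sum
`∑_{k ∈ U} c(k)/sin²(kα)` over `U = {k : 1 ≤ k ≤ n, gcd(k, 2n+1) = 1}` is nonzero. -/
theorem character_sum_nonzero (n : ℕ) (hn : 1 ≤ n) (c : ℕ → ℂ)
    (hc : ∀ k ∈ (Finset.Icc 1 n).filter (fun k => Nat.Coprime k (2 * n + 1)),
      ‖c k‖ ≤ 1)
    (hc1 : c 1 = 1) :
    ∑ k ∈ (Finset.Icc 1 n).filter (fun k => Nat.Coprime k (2 * n + 1)),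
        c k / ((Real.sin (k * (π / (2 * n + 1))) : ℂ)) ^ 2 ≠ 0 := by
  set U := (Icc 1 n).filter (fun k => Nat.Coprime k (2 * n + 1))
  set α := π / (2 * n + 1)
  intro hsum
  have h1U : 1 ∈ U := mem_filter.2 ⟨mem_Icc.2 ⟨le_rfl, hn⟩, Nat.coprime_one_left _⟩
  obtain ⟨hα0, hα⟩ := natCast_mul_pi_div_mem_Ioo le_rfl hn
  rw [Nat.cast_one, one_mul] at hα0 hα
  have hsinα : 0 < sin α := sin_pos_of_pos_of_lt_pi hα0 (by linarith [pi_pos])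
  refine (sum_Icc_two_one_div_sin_sq_lt hn).not_ge ?_
  calc 1 / α ^ 2 ≤ 1 / sin α ^ 2 :=
        one_div_le_one_div_of_le (by positivity) (pow_le_pow_left₀ hsinα.le (sin_le hα0.le) 2)
    _ = ‖c 1 / (sin (1 * α) : ℂ) ^ 2‖ := by
        rw [hc1, one_mul, norm_div, norm_one, norm_pow, Complex.norm_real, norm_eq_abs, sq_abs]
    _ ≤ ∑ k ∈ U.erase 1, ‖c k / (sin (k * α) : ℂ) ^ 2‖ := by
        simpa using norm_le_sum_erase_norm_of_sum_eq_zero hsum h1U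
    _ ≤ ∑ k ∈ U.erase 1, 1 / sin (k * α) ^ 2 :=
        sum_le_sum fun k hk => norm_div_ofReal_sq_le (hc k (mem_of_mem_erase hk)) _
    _ ≤ ∑ k ∈ Icc 2 n, 1 / sin (k * α) ^ 2 := by
        refine sum_le_sum_of_subset_of_nonneg (fun k hk => ?_) fun k _ _ => by positivity
        have hk1 := ne_of_mem_erase hk
        have hkI := mem_Icc.1 (mem_filter.1 (mem_of_mem_erase hk)).1
        exact mem_Icc.2 ⟨by omega, hkI.2⟩
end
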